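/- arXiv:1407.7776 — 2 statements merged into one kernel-verified Lean document; each statement's English description precedes it below -/
import Mathlib

section
/- Fix pairwise distinct z₁, …, z_n ∈ D and values w₁, …, w_n ∈ D, and suppose f ∈ U (analytic self-map of D) solves f(z_j) = w_j for all j. Then the hyperbolic difference quotients of the data satisfy |Δ^k_j| ≤ 1 for all 0 ≤ k ≤ n−1 and k+1 ≤ j ≤ n, where Δ^0_j = w_j and Δ^k_j = [Δ^{k−1}_j, Δ^{k−1}_k]/[z_j, z_k]. -/
open Complex Set ComplexConjugate

noncomputable section

/-- The open unit disc in ℂ. -/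
def unitDisc : Set ℂ := {z : ℂ | ‖z‖ < 1}

/-- Pseudohyperbolic distance ρ(a,b) = |(a-b)/(1 - conj b · a)|. -/
def pd (a b : ℂ) : ℝ := ‖(a - b) / (1 - conj b * a)‖

/-- Hyperbolic distance β = log((1+ρ)/(1-ρ)). -/
def hd (a b : ℂ) : ℝ := Real.log ((1 + pd a b) / (1 - pd a b))

/-- The complex pseudohyperbolic "bracket" [a,b] = (b-a)/(1 - conj b · a). -/
def hbr (a b : ℂ) : ℂ := (b - a) / (1 - conj b * a)

/-- f is an analytic self-map of the unit disc. -/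
def IsSelfMap (f : ℂ → ℂ) : Prop :=
  DifferentiableOn ℂ f unitDisc ∧ Set.MapsTo f unitDisc unitDisc

/-- Hyperbolic derivative f^h(z) = (1-|z|²) f'(z) / (1-|f z|²). -/
def hypDeriv (f : ℂ → ℂ) (z : ℂ) : ℂ :=
  (1 - (‖z‖ : ℂ) ^ 2) * deriv f z / (1 - (‖f z‖ : ℂ) ^ 2)

/-- The triangle of hyperbolic difference quotients:
`hdq z w 0 j = w j` and `Δ^{k+1}_j = [Δ^k_j, Δ^k_{k+1}]/[z_j, z_{k+1}]`
(points indexed starting at 1, so `Δ^k` involves the point `z_k`). -/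
def hdq (z w : ℕ → ℂ) : ℕ → ℕ → ℂ
  | 0, j => w j
  | k + 1, j => hbr (hdq z w k j) (hdq z w k (k + 1)) / hbr (z j) (z (k + 1))

/-!
Schur's algorithm. Let `g` map the disc holomorphically into the closed disc and let `a` lie
in the disc. If `|g a| < 1`, conjugating `g` by the involutions `ζ ↦ [ζ, a]` and
`ζ ↦ [ζ, g a]` gives a map `φ` of the same kind with `φ 0 = 0`, and
`[g ζ, g a] / [ζ, a] = φ u / u` at `u = [ζ, a]`; so the quotient is the difference quotient
`dslope φ 0`, which is holomorphic and bounded by `1` by the Schwarz lemma. If `|g a| = 1`, the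
maximum principle makes `g` constant and the quotient vanishes. Starting from `f`, induction on
`k` yields such a `g` with `Δ^k_j = g z_j` for `j > k`, whence `|Δ^k_j| ≤ 1`.
-/

open Metric

lemma unitDisc_eq_ball : unitDisc = ball (0 : ℂ) 1 := by
  ext z; simp [unitDisc]

lemma isOpen_unitDisc : IsOpen unitDisc := unitDisc_eq_ball ▸ isOpen_ball

lemma unitDisc_subset_closedBall : unitDisc ⊆ closedBall 0 1 :=
  unitDisc_eq_ball ▸ ball_subset_closedBall

/-- The Schur class. The closed disc is needed because a step of Schur's algorithm applied to a
self-map of the disc can produce a unimodular constant. -/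
def IsSchurFunction (g : ℂ → ℂ) : Prop :=
  DifferentiableOn ℂ g unitDisc ∧ MapsTo g unitDisc (closedBall 0 1)

lemma IsSelfMap.isSchurFunction {f : ℂ → ℂ} (hf : IsSelfMap f) : IsSchurFunction f :=
  ⟨hf.1, hf.2.mono_right fun _ h => mem_closedBall_zero_iff.2 (le_of_lt h)⟩

lemma one_sub_conj_mul_ne_zero {a ζ : ℂ} (ha : ‖a‖ < 1) (hζ : ‖ζ‖ ≤ 1) :
    1 - conj a * ζ ≠ 0 := by
  rw [sub_ne_zero, ne_comm]
  refine ne_of_apply_ne norm (ne_of_lt ?_)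
  rw [norm_mul, Complex.norm_conj, norm_one]
  exact mul_lt_one_of_nonneg_of_lt_one_left (norm_nonneg a) ha hζ

lemma sq_norm_one_sub_conj_mul (a ζ : ℂ) :
    ‖1 - conj a * ζ‖ ^ 2 = ‖a - ζ‖ ^ 2 + (1 - ‖a‖ ^ 2) * (1 - ‖ζ‖ ^ 2) := by
  simp only [Complex.sq_norm, normSq_apply, mul_re, mul_im, sub_re, sub_im, conj_re, conj_im,
    one_re, one_im]
  ring

lemma norm_hbr_le_one {a ζ : ℂ} (ha : ‖a‖ < 1) (hζ : ‖ζ‖ ≤ 1) : ‖hbr ζ a‖ ≤ 1 := by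
  rw [hbr, norm_div, div_le_one (norm_pos_iff.2 (one_sub_conj_mul_ne_zero ha hζ)),
    ← pow_le_pow_iff_left₀ (norm_nonneg _) (norm_nonneg _) two_ne_zero,
    sq_norm_one_sub_conj_mul]
  exact le_add_of_nonneg_right <| mul_nonneg (sub_nonneg.2 (pow_le_one₀ (norm_nonneg a) ha.le))
    (sub_nonneg.2 (pow_le_one₀ (norm_nonneg ζ) hζ))

lemma norm_hbr_lt_one {a ζ : ℂ} (ha : ‖a‖ < 1) (hζ : ‖ζ‖ < 1) : ‖hbr ζ a‖ < 1 := by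
  rw [hbr, norm_div, div_lt_one (norm_pos_iff.2 (one_sub_conj_mul_ne_zero ha hζ.le)),
    ← pow_lt_pow_iff_left₀ (norm_nonneg _) (norm_nonneg _) two_ne_zero,
    sq_norm_one_sub_conj_mul]
  exact lt_add_of_pos_right _ <| mul_pos (sub_pos.2 (pow_lt_one₀ (norm_nonneg a) ha two_ne_zero))
    (sub_pos.2 (pow_lt_one₀ (norm_nonneg ζ) hζ two_ne_zero))

lemma hbr_self (a : ℂ) : hbr a a = 0 := by simp [hbr]

lemma hbr_zero_left (a : ℂ) : hbr 0 a = a := by simp [hbr]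

lemma hbr_ne_zero {a ζ : ℂ} (ha : ‖a‖ < 1) (hζ : ‖ζ‖ ≤ 1) (hne : ζ ≠ a) : hbr ζ a ≠ 0 :=
  div_ne_zero (sub_ne_zero.2 hne.symm) (one_sub_conj_mul_ne_zero ha hζ)

lemma hbr_hbr_left {a ζ : ℂ} (ha : ‖a‖ < 1) (hζ : ‖ζ‖ ≤ 1) : hbr (hbr ζ a) a = ζ := by
  have hd := one_sub_conj_mul_ne_zero ha hζ
  have ha' : 1 - conj a * a ≠ 0 := one_sub_conj_mul_ne_zero ha ha.le
  have hden : 1 - conj a * hbr ζ a = (1 - conj a * a) / (1 - conj a * ζ) := by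
    rw [hbr]; field_simp; ring
  have hnum : a - hbr ζ a = ζ * ((1 - conj a * a) / (1 - conj a * ζ)) := by
    rw [hbr, mul_div_assoc', eq_div_iff hd, sub_mul, div_mul_cancel₀ _ hd]; ring
  rw [hbr, hnum, hden, mul_div_cancel_right₀ ζ (div_ne_zero ha' hd)]

lemma differentiableOn_hbr_left {a : ℂ} (ha : ‖a‖ < 1) :
    DifferentiableOn ℂ (hbr · a) (closedBall 0 1) :=
  .div (by fun_prop) (by fun_prop) fun ζ hζ =>
    one_sub_conj_mul_ne_zero ha (mem_closedBall_zero_iff.1 hζ)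

namespace IsSchurFunction

variable {g : ℂ → ℂ} {a : ℂ}

lemma comp_hbr (hg : IsSchurFunction g) (ha : ‖a‖ < 1) (hga : ‖g a‖ < 1) :
    IsSchurFunction fun u => hbr (g (hbr u a)) (g a) := by
  have hmaps : MapsTo (hbr · a) unitDisc unitDisc := fun u hu => norm_hbr_lt_one ha hu
  have hgmaps : MapsTo (g ∘ (hbr · a)) unitDisc (closedBall 0 1) := hg.2.comp hmaps
  refine ⟨(differentiableOn_hbr_left hga).comp
    (hg.1.comp ((differentiableOn_hbr_left ha).mono unitDisc_subset_closedBall) hmaps) hgmaps,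
    fun u hu => ?_⟩
  exact mem_closedBall_zero_iff.2 (norm_hbr_le_one hga (mem_closedBall_zero_iff.1 (hgmaps hu)))

lemma exists_hbr_quotient_of_norm_lt_one (hg : IsSchurFunction g) (ha : a ∈ unitDisc)
    (hga : ‖g a‖ < 1) :
    ∃ G, IsSchurFunction G ∧ ∀ ζ ∈ unitDisc, ζ ≠ a → G ζ = hbr (g ζ) (g a) / hbr ζ a := by
  set φ := fun u => hbr (g (hbr u a)) (g a)
  have hφ : IsSchurFunction φ := hg.comp_hbr ha hga
  have hφ0 : φ 0 = 0 := by simp only [φ, hbr_zero_left, hbr_self]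
  have hdslope : DifferentiableOn ℂ (dslope φ 0) unitDisc :=
    (differentiableOn_dslope (isOpen_unitDisc.mem_nhds (by simp [unitDisc]))).2 hφ.1
  refine ⟨fun ζ => dslope φ 0 (hbr ζ a),
    ⟨hdslope.comp ((differentiableOn_hbr_left ha).mono unitDisc_subset_closedBall)
      fun ζ hζ => norm_hbr_lt_one ha hζ, fun ζ hζ => ?_⟩, fun ζ hζ hne => ?_⟩
  · refine mem_closedBall_zero_iff.2 ((Complex.norm_dslope_le_div_of_mapsTo_ball
      (unitDisc_eq_ball ▸ hφ.1) (by rw [hφ0, ← unitDisc_eq_ball]; exact hφ.2)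
      (mem_ball_zero_iff.2 (norm_hbr_lt_one ha hζ))).trans_eq (div_one 1))
  · dsimp only
    rw [dslope_of_ne _ (hbr_ne_zero ha hζ.le hne), slope_def_field, hφ0, sub_zero, sub_zero]
    simp only [φ, hbr_hbr_left ha hζ.le]

lemma eqOn_const_of_norm_eq_one (hg : IsSchurFunction g) (ha : a ∈ unitDisc)
    (hga : ‖g a‖ = 1) : EqOn g (Function.const ℂ (g a)) unitDisc :=
  Complex.eqOn_of_isPreconnected_of_isMaxOn_norm
    (unitDisc_eq_ball ▸ (convex_ball (0 : ℂ) 1).isPreconnected) isOpen_unitDisc hg.1 ha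
    fun ζ hζ => by simpa [hga] using mem_closedBall_zero_iff.1 (hg.2 hζ)

theorem exists_hbr_quotient (hg : IsSchurFunction g) (ha : a ∈ unitDisc) :
    ∃ G, IsSchurFunction G ∧ ∀ ζ ∈ unitDisc, ζ ≠ a → G ζ = hbr (g ζ) (g a) / hbr ζ a := by
  rcases (mem_closedBall_zero_iff.1 (hg.2 ha)).lt_or_eq with hga | hga
  · exact hg.exists_hbr_quotient_of_norm_lt_one ha hga
  · refine ⟨0, ⟨differentiableOn_const 0, fun _ _ => by simp⟩, fun ζ hζ _ => ?_⟩
    rw [hg.eqOn_const_of_norm_eq_one ha hga hζ, Function.const_apply, hbr_self, zero_div, Pi.zero_apply]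

end IsSchurFunction

theorem exists_isSchurFunction_hdq_eq (n : ℕ) (z w : ℕ → ℂ)
    (hzD : ∀ j, 1 ≤ j → j ≤ n → z j ∈ unitDisc)
    (hdist : ∀ i j, 1 ≤ i → i ≤ n → 1 ≤ j → j ≤ n → i ≠ j → z i ≠ z j)
    {f : ℂ → ℂ} (hf : IsSchurFunction f) (hsol : ∀ j, 1 ≤ j → j ≤ n → f (z j) = w j) :
    ∀ k < n, ∃ g, IsSchurFunction g ∧ ∀ j, k + 1 ≤ j → j ≤ n → hdq z w k j = g (z j)
  | 0, _ => ⟨f, hf, fun j hj hjn => (hsol j hj hjn).symm⟩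
  | k + 1, hk => by
    obtain ⟨g, hg, hgz⟩ := exists_isSchurFunction_hdq_eq n z w hzD hdist hf hsol k (by omega)
    obtain ⟨G, hG, hGz⟩ := hg.exists_hbr_quotient (hzD (k + 1) (by omega) hk.le)
    refine ⟨G, hG, fun j hj hjn => ?_⟩
    have hne : z j ≠ z (k + 1) := hdist j (k + 1) (by omega) hjn (by omega) hk.le (by omega)
    rw [hdq, hgz j (by omega) hjn, hgz (k + 1) le_rfl hk.le, hGz _ (hzD j (by omega) hjn) hne]

theorem hyperbolic_difference_quotients_bounded_general
    (n : ℕ) (z w : ℕ → ℂ)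
    (hzD : ∀ j, 1 ≤ j → j ≤ n → z j ∈ unitDisc)
    (hdist : ∀ i j, 1 ≤ i → i ≤ n → 1 ≤ j → j ≤ n → i ≠ j → z i ≠ z j)
    (f : ℂ → ℂ) (hf : IsSelfMap f)
    (hsol : ∀ j, 1 ≤ j → j ≤ n → f (z j) = w j) :
    ∀ k j, k ≤ n - 1 → k + 1 ≤ j → j ≤ n → ‖hdq z w k j‖ ≤ 1 := by
  intro k j _ hj hjn
  obtain ⟨g, hg, hgz⟩ :=
    exists_isSchurFunction_hdq_eq n z w hzD hdist hf.isSchurFunction hsol k (by omega)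
  rw [hgz j hj hjn]
  exact mem_closedBall_zero_iff.1 (hg.2 (hzD j (by omega) hjn))

theorem hyperbolic_difference_quotients_bounded
    (n : ℕ) (z w : ℕ → ℂ)
    (hzD : ∀ j, 1 ≤ j → j ≤ n → z j ∈ unitDisc)
    (hwD : ∀ j, 1 ≤ j → j ≤ n → w j ∈ unitDisc)
    (hdist : ∀ i j, 1 ≤ i → i ≤ n → 1 ≤ j → j ≤ n → i ≠ j → z i ≠ z j)
    (f : ℂ → ℂ) (hf : IsSelfMap f)
    (hsol : ∀ j, 1 ≤ j → j ≤ n → f (z j) = w j) :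
    ∀ k j, k ≤ n - 1 → k + 1 ≤ j → j ≤ n → ‖hdq z w k j‖ ≤ 1 :=
  hyperbolic_difference_quotients_bounded_general n z w hzD hdist f hf hsol
end
end

section
/- For a fixed η > 0, sup { β(z/2, w/2)/β(z, w) : |z| > r, |w| > r, β(z, w) ≥ η } tends to 0 as r → 1⁻. -/
open Complex Set ComplexConjugate

noncomputable section

/-! On the disc of radius `1/2` one has `|1 - b̄a| ≥ 3/4` and `ρ(a, b) ≤ 4/5`, so
`β(z/2, w/2)` is bounded by a constant times `min(1, |z - w|)`. Pairs with `|z - w| ≤ √(1 - r)`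
therefore have ratio `O(√(1 - r) / η)`. For the others, the identity
`|1 - w̄z|² = |z - w|² + (1 - |z|²)(1 - |w|²)` gives
`β(z, w) ≥ log (|z - w|² / ((1 - |z|²)(1 - |w|²))) ≥ log (1 / (4(1 - r)))`,
so their ratio is `O(1 / log (1 / (1 - r)))`. -/

lemma norm_one_sub_conj_mul_sq (a b : ℂ) :
    ‖1 - conj b * a‖ ^ 2 = ‖a - b‖ ^ 2 + (1 - ‖a‖ ^ 2) * (1 - ‖b‖ ^ 2) := by
  simp only [Complex.sq_norm, Complex.normSq_apply, Complex.sub_re, Complex.sub_im,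
    Complex.mul_re, Complex.mul_im, Complex.one_re, Complex.one_im, Complex.conj_re,
    Complex.conj_im]
  ring

lemma norm_sub_lt_norm_one_sub_conj_mul {a b : ℂ} (ha : ‖a‖ < 1) (hb : ‖b‖ < 1) :
    ‖a - b‖ < ‖1 - conj b * a‖ := by
  have hid := norm_one_sub_conj_mul_sq a b
  have hK : 0 < (1 - ‖a‖ ^ 2) * (1 - ‖b‖ ^ 2) := by
    apply mul_pos <;> nlinarith [norm_nonneg a, norm_nonneg b]
  nlinarith [norm_nonneg (a - b), norm_nonneg (1 - conj b * a)]

lemma pd_eq (a b : ℂ) : pd a b = ‖a - b‖ / ‖1 - conj b * a‖ := norm_div _ _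

lemma pd_nonneg (a b : ℂ) : 0 ≤ pd a b := norm_nonneg _

-- `Real.log` is even and vanishes at `0`, so this holds even where `pd a b ≥ 1`.
lemma hd_nonneg (a b : ℂ) : 0 ≤ hd a b := by
  unfold hd
  rcases eq_or_ne (pd a b) 1 with h | h
  · simp [h]
  rw [← Real.log_abs, abs_div]
  have hp := pd_nonneg a b
  have hden : 0 < |1 - pd a b| := abs_pos.mpr (sub_ne_zero.mpr (Ne.symm h))
  refine Real.log_nonneg ((one_le_div hden).mpr ?_)
  rw [abs_of_nonneg (by linarith : (0 : ℝ) ≤ 1 + pd a b), abs_sub_le_iff]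
  constructor <;> linarith

lemma hd_le_of_pd_le {a b : ℂ} {c : ℝ} (hc : c < 1) (h : pd a b ≤ c) :
    hd a b ≤ 2 / (1 - c) * pd a b := by
  have hp := pd_nonneg a b
  have h1 : 0 < 1 - pd a b := by linarith
  have hlog := Real.log_le_sub_one_of_pos (by positivity : 0 < (1 + pd a b) / (1 - pd a b))
  calc hd a b ≤ (1 + pd a b) / (1 - pd a b) - 1 := hlog
    _ = 2 * pd a b / (1 - pd a b) := by field_simp; ring
    _ ≤ 2 * pd a b / (1 - c) := by gcongr
    _ = 2 / (1 - c) * pd a b := by ring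

lemma three_fourths_le_norm_one_sub_conj_mul {a b : ℂ} (ha : ‖a‖ ≤ 1 / 2) (hb : ‖b‖ ≤ 1 / 2) :
    3 / 4 ≤ ‖1 - conj b * a‖ := by
  have hab : ‖conj b * a‖ ≤ 1 / 4 := by
    rw [norm_mul, Complex.norm_conj]
    nlinarith [norm_nonneg a, norm_nonneg b]
  have h := norm_sub_norm_le (1 : ℂ) (conj b * a)
  rw [norm_one] at h
  linarith

lemma pd_le_four_fifths {a b : ℂ} (ha : ‖a‖ ≤ 1 / 2) (hb : ‖b‖ ≤ 1 / 2) :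
    pd a b ≤ 4 / 5 := by
  have hid := norm_one_sub_conj_mul_sq a b
  have hD := three_fourths_le_norm_one_sub_conj_mul ha hb
  have he : ‖a - b‖ ≤ 1 := by linarith [norm_sub_le a b]
  have hK : 9 / 16 ≤ (1 - ‖a‖ ^ 2) * (1 - ‖b‖ ^ 2) := by
    have ha2 : 3 / 4 ≤ 1 - ‖a‖ ^ 2 := by nlinarith [norm_nonneg a]
    have hb2 : 3 / 4 ≤ 1 - ‖b‖ ^ 2 := by nlinarith [norm_nonneg b]
    nlinarith
  rw [pd_eq, div_le_iff₀ (by linarith)]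
  nlinarith [norm_nonneg (a - b)]

lemma pd_le_four_thirds_mul_norm_sub {a b : ℂ} (ha : ‖a‖ ≤ 1 / 2) (hb : ‖b‖ ≤ 1 / 2) :
    pd a b ≤ 4 / 3 * ‖a - b‖ := by
  have hD := three_fourths_le_norm_one_sub_conj_mul ha hb
  rw [pd_eq, div_le_iff₀ (by linarith)]
  nlinarith [norm_nonneg (a - b)]

lemma hd_le_ten_mul_pd {a b : ℂ} (ha : ‖a‖ ≤ 1 / 2) (hb : ‖b‖ ≤ 1 / 2) :
    hd a b ≤ 10 * pd a b := by
  have h := hd_le_of_pd_le (by norm_num) (pd_le_four_fifths ha hb)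
  norm_num at h
  exact h

lemma log_le_hd {a b : ℂ} (ha : ‖a‖ < 1) (hb : ‖b‖ < 1) :
    Real.log (‖a - b‖ ^ 2 / ((1 - ‖a‖ ^ 2) * (1 - ‖b‖ ^ 2))) ≤ hd a b := by
  rcases eq_or_ne a b with rfl | hab
  · simpa using hd_nonneg a a
  have hid := norm_one_sub_conj_mul_sq a b
  have hlt := norm_sub_lt_norm_one_sub_conj_mul ha hb
  have he : 0 < ‖a - b‖ := norm_pos_iff.mpr (sub_ne_zero.mpr hab)
  have hK : 0 < (1 - ‖a‖ ^ 2) * (1 - ‖b‖ ^ 2) := by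
    apply mul_pos <;> nlinarith [norm_nonneg a, norm_nonneg b]
  set e := ‖a - b‖
  set D := ‖1 - conj b * a‖
  set K := (1 - ‖a‖ ^ 2) * (1 - ‖b‖ ^ 2)
  have hratio : (1 + pd a b) / (1 - pd a b) = (D + e) ^ 2 / K := by
    have hD : 0 < D := by linarith
    have hDe : 0 < D - e := by linarith
    calc (1 + pd a b) / (1 - pd a b) = (D + e) / (D - e) := by
          rw [pd_eq]
          change (1 + e / D) / (1 - e / D) = _
          rw [one_add_div hD.ne', one_sub_div hD.ne', div_div_div_cancel_right₀ hD.ne']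
      _ = (D + e) ^ 2 / K := by
          rw [div_eq_div_iff hDe.ne' hK.ne']
          linear_combination -(D + e) * hid
  unfold hd
  rw [hratio]
  apply Real.log_le_log (by positivity)
  gcongr
  linarith

lemma norm_half_le {z : ℂ} (hz : ‖z‖ < 1) : ‖z / 2‖ ≤ 1 / 2 := by
  rw [norm_div, Complex.norm_two]
  linarith

lemma hd_half_le_twenty_thirds_mul {z w : ℂ} (hz : ‖z‖ < 1) (hw : ‖w‖ < 1) :
    hd (z / 2) (w / 2) ≤ 20 / 3 * ‖z - w‖ := by
  have hzh := norm_half_le hz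
  have hwh := norm_half_le hw
  have hsub : ‖z / 2 - w / 2‖ = ‖z - w‖ / 2 := by
    rw [← sub_div, norm_div, Complex.norm_two]
  calc hd (z / 2) (w / 2) ≤ 10 * pd (z / 2) (w / 2) := hd_le_ten_mul_pd hzh hwh
    _ ≤ 10 * (4 / 3 * ‖z / 2 - w / 2‖) := by
        gcongr; exact pd_le_four_thirds_mul_norm_sub hzh hwh
    _ = 20 / 3 * ‖z - w‖ := by rw [hsub]; ring

lemma hd_half_le_eight {z w : ℂ} (hz : ‖z‖ < 1) (hw : ‖w‖ < 1) :
    hd (z / 2) (w / 2) ≤ 8 := by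
  have hzh := norm_half_le hz
  have hwh := norm_half_le hw
  linarith [hd_le_ten_mul_pd hzh hwh, pd_le_four_fifths hzh hwh]

def contractionBound (η r : ℝ) : ℝ :=
  20 / 3 * √(1 - r) / η + 8 / Real.log (1 / (4 * (1 - r)))

lemma log_inv_four_mul_one_sub_pos {r : ℝ} (hr : 3 / 4 < r) (hr1 : r < 1) :
    0 < Real.log (1 / (4 * (1 - r))) := by
  apply Real.log_pos
  rw [lt_div_iff₀ (by linarith)]
  linarith

lemma contractionBound_nonneg {η r : ℝ} (hη : 0 < η) (hr : 3 / 4 < r) (hr1 : r < 1) :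
    0 ≤ contractionBound η r := by
  have := log_inv_four_mul_one_sub_pos hr hr1
  unfold contractionBound
  positivity

lemma one_sub_norm_sq_lt {z : ℂ} {r : ℝ} (hz : ‖z‖ < 1) (hrz : r < ‖z‖) :
    1 - ‖z‖ ^ 2 < 2 * (1 - r) := by
  nlinarith [norm_nonneg z]

lemma log_inv_four_mul_one_sub_le_hd {z w : ℂ} {r : ℝ} (hz : ‖z‖ < 1) (hw : ‖w‖ < 1)
    (hrz : r < ‖z‖) (hrw : r < ‖w‖) (hfar : √(1 - r) < ‖z - w‖) :
    Real.log (1 / (4 * (1 - r))) ≤ hd z w := by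
  have h1r : 0 < 1 - r := by linarith
  have hKz : 0 < 1 - ‖z‖ ^ 2 := by nlinarith [norm_nonneg z]
  have hKw : 0 < 1 - ‖w‖ ^ 2 := by nlinarith [norm_nonneg w]
  have he : 1 - r < ‖z - w‖ ^ 2 := by
    rw [← Real.sq_sqrt h1r.le]
    gcongr
  refine le_trans ?_ (log_le_hd hz hw)
  apply Real.log_le_log (by positivity)
  calc 1 / (4 * (1 - r)) = (1 - r) / (2 * (1 - r) * (2 * (1 - r))) := by field_simp; ring
    _ ≤ ‖z - w‖ ^ 2 / ((1 - ‖z‖ ^ 2) * (1 - ‖w‖ ^ 2)) := by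
        gcongr
        · exact (one_sub_norm_sq_lt hz hrz).le
        · exact (one_sub_norm_sq_lt hw hrw).le

lemma hd_half_div_hd_le_contractionBound {η r : ℝ} {z w : ℂ} (hη : 0 < η) (hr : 3 / 4 < r)
    (hz : ‖z‖ < 1) (hw : ‖w‖ < 1) (hrz : r < ‖z‖) (hrw : r < ‖w‖) (hzw : η ≤ hd z w) :
    hd (z / 2) (w / 2) / hd z w ≤ contractionBound η r := by
  have hr1 : r < 1 := hrz.trans hz
  have hL := log_inv_four_mul_one_sub_pos hr hr1
  have hfirst : 0 ≤ 20 / 3 * √(1 - r) / η := by positivity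
  have hsecond : 0 ≤ 8 / Real.log (1 / (4 * (1 - r))) := by positivity
  unfold contractionBound
  rcases le_or_gt ‖z - w‖ (√(1 - r)) with hnear | hfar
  · calc hd (z / 2) (w / 2) / hd z w ≤ 20 / 3 * √(1 - r) / η :=
          div_le_div₀ (by positivity) ((hd_half_le_twenty_thirds_mul hz hw).trans (by gcongr))
            hη hzw
      _ ≤ _ := le_add_of_nonneg_right hsecond
  · calc hd (z / 2) (w / 2) / hd z w ≤ 8 / Real.log (1 / (4 * (1 - r))) := by
          gcongr
          · exact hd_half_le_eight hz hw
          · exact log_inv_four_mul_one_sub_le_hd hz hw hrz hrw hfar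
      _ ≤ _ := le_add_of_nonneg_left hfirst

lemma tendsto_contractionBound (η : ℝ) :
    Filter.Tendsto (contractionBound η) (nhdsWithin 1 (Set.Iio 1)) (nhds 0) := by
  have hsub : Filter.Tendsto (fun r : ℝ => 1 - r) (nhdsWithin 1 (Set.Iio 1))
      (nhdsWithin 0 (Set.Ioi 0)) := by
    refine tendsto_nhdsWithin_iff.mpr
      ⟨?_, eventually_nhdsWithin_of_forall fun r hr => sub_pos.mpr (mem_Iio.mp hr)⟩
    exact ((continuous_const.sub continuous_id).tendsto' 1 0 (sub_self 1)).mono_left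
      nhdsWithin_le_nhds
  have hsqrt : Filter.Tendsto (fun r : ℝ => 20 / 3 * √(1 - r) / η) (nhdsWithin 1 (Set.Iio 1))
      (nhds 0) := by
    have h := (((Real.continuous_sqrt.tendsto 0).comp
      (tendsto_nhds_of_tendsto_nhdsWithin hsub)).const_mul (20 / 3)).div_const η
    simpa using h
  have hlog : Filter.Tendsto (fun r : ℝ => Real.log (1 / (4 * (1 - r))))
      (nhdsWithin 1 (Set.Iio 1)) Filter.atTop := by
    have h := (hsub.inv_tendsto_nhdsGT_zero.const_mul_atTop (by norm_num : (0 : ℝ) < 4⁻¹))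
    refine Real.tendsto_log_atTop.comp (h.congr fun r => ?_)
    simp [mul_comm]
  have h := hsqrt.add ((tendsto_const_nhds (x := (8 : ℝ))).div_atTop hlog)
  rw [add_zero] at h
  exact h

theorem half_map_contraction_near_boundary (η : ℝ) (hη : 0 < η) :
    Filter.Tendsto
      (fun r : ℝ => sSup {t : ℝ | ∃ z ∈ unitDisc, ∃ w ∈ unitDisc,
        r < ‖z‖ ∧ r < ‖w‖ ∧ η ≤ hd z w ∧
        t = hd (z / 2) (w / 2) / hd z w})
      (nhdsWithin 1 (Set.Iio 1)) (nhds 0) := by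
  refine tendsto_of_tendsto_of_tendsto_of_le_of_le' tendsto_const_nhds
    (tendsto_contractionBound η) (Filter.Eventually.of_forall fun r => ?_) ?_
  · refine Real.sSup_nonneg fun t ⟨z, _, w, _, _, _, _, ht⟩ => ?_
    exact ht ▸ div_nonneg (hd_nonneg _ _) (hd_nonneg _ _)
  · filter_upwards [Ioo_mem_nhdsLT (show (3 / 4 : ℝ) < 1 by norm_num)] with r ⟨hr, hr1⟩
    refine Real.sSup_le (fun t ⟨z, hz, w, hw, hrz, hrw, hzw, ht⟩ => ?_)
      (contractionBound_nonneg hη hr hr1)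
    exact ht ▸ hd_half_div_hd_le_contractionBound hη hr hz hw hrz hrw hzw
end
end
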